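/- Let D be a quasi-symmetric design with block intersection numbers x and y, and G an automorphism group acting on both points and blocks of D with all orbits of the same size ω. If a prime p divides k, x, and y, then the columns of the point orbit matrix of D with respect to G span a self-orthogonal code over F_p. -/

import Mathlib

/-!
Counting the triples `(q, a, a')` with `q ∈ a ∩ a'`, `a ∈ BO j`, `a' ∈ BO j'` in two ways gives
`ω · ∑ᵢ γᵢⱼ γᵢⱼ' = ω · ∑_{a' ∈ BO j'} |a₀ ∩ a'|`: the row counts are constant on point orbits,
and the inner sum is the same for every block `a₀` of `BO j`. Each `|a₀ ∩ a'|` is `k`, `x` or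
`y`, hence divisible by `p`, so any two columns are orthogonal over `𝔽_p`, and orthogonality
passes to their span by bilinearity.
-/

open Finset Matrix

def IsOrbit {G β : Type*} [Group G] (π : G →* Equiv.Perm β) (O : Finset β) (a₀ : β) : Prop :=
  ∀ c, c ∈ O ↔ ∃ g, π g a₀ = c

namespace IsOrbit

variable {G β : Type*} [Group G] {π : G →* Equiv.Perm β} {O : Finset β} {a₀ : β}

theorem self_mem (hO : IsOrbit π O a₀) : a₀ ∈ O :=
  (hO a₀).2 ⟨1, by simp⟩

theorem apply_mem (hO : IsOrbit π O a₀) (g : G) {c : β} (hc : c ∈ O) : π g c ∈ O := by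
  obtain ⟨h, rfl⟩ := (hO c).1 hc
  exact (hO _).2 ⟨g * h, by simp⟩

theorem apply_mem_iff (hO : IsOrbit π O a₀) (g : G) (c : β) : π g c ∈ O ↔ c ∈ O :=
  ⟨fun hc => by simpa using hO.apply_mem g⁻¹ hc, hO.apply_mem g⟩

theorem exists_apply_eq (hO : IsOrbit π O a₀) {c d : β} (hc : c ∈ O) (hd : d ∈ O) :
    ∃ g, π g c = d := by
  obtain ⟨h₁, rfl⟩ := (hO c).1 hc
  obtain ⟨h₂, rfl⟩ := (hO d).1 hd
  exact ⟨h₂ * h₁⁻¹, by simp⟩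

end IsOrbit

theorem sum_card_filter_mul_card_filter {α β : Type*} [Fintype α] [DecidableEq α]
    (B : β → Finset α) (X Y : Finset β) :
    ∑ q, #{a ∈ X | q ∈ B a} * #{a' ∈ Y | q ∈ B a'} = ∑ a ∈ X, ∑ a' ∈ Y, #(B a ∩ B a') := by
  simp only [card_filter, sum_mul_sum, ite_mul, one_mul, zero_mul]
  rw [sum_comm]
  refine sum_congr rfl fun a _ => ?_
  rw [sum_comm]
  refine sum_congr rfl fun a' _ => ?_
  simp only [← ite_and, ← card_filter]
  congr 1
  ext
  simp

theorem sum_eq_card_nsmul_sum_of_partition {ι α M : Type*} [Fintype ι] [Fintype α]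
    [DecidableEq α] [AddCommMonoid M] (P : ι → Finset α) (hcov : ∀ q, ∃ i, q ∈ P i)
    (hdisj : ∀ i i', i ≠ i' → Disjoint (P i) (P i')) {ω : ℕ} (hcard : ∀ i, #(P i) = ω)
    {f : α → M} {c : ι → M} (hf : ∀ i, ∀ q ∈ P i, f q = c i) :
    ∑ q, f q = ω • ∑ i, c i := by
  have huniv : univ.biUnion P = univ :=
    eq_univ_of_forall fun q => mem_biUnion.2 <| (hcov q).imp fun i hi => ⟨mem_univ i, hi⟩
  rw [← huniv, sum_biUnion fun i _ i' _ => hdisj i i', smul_sum]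
  exact sum_congr rfl fun i _ => by rw [sum_congr rfl (hf i), sum_const, hcard]

section Design

variable {G α β : Type*} [Group G] [DecidableEq α] {ρ : G →* Equiv.Perm α} {σ : G →* Equiv.Perm β}
  {B : β → Finset α}

theorem apply_mem_apply_iff (hσ : ∀ g a, B (σ g a) = (B a).image (ρ g)) (g : G) (a : β)
    (q : α) : ρ g q ∈ B (σ g a) ↔ q ∈ B a := by
  rw [hσ]
  exact (ρ g).injective.mem_finset_image

theorem card_inter_apply (hσ : ∀ g a, B (σ g a) = (B a).image (ρ g)) (g : G)
    (a a' : β) : #(B (σ g a) ∩ B (σ g a')) = #(B a ∩ B a') := by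
  rw [hσ, hσ, ← image_inter _ _ (ρ g).injective, card_image_of_injective _ (ρ g).injective]

theorem card_filter_apply_mem (hσ : ∀ g a, B (σ g a) = (B a).image (ρ g)) {O : Finset β}
    {a₀ : β} (hO : IsOrbit σ O a₀) (g : G) (q : α) :
    #{a ∈ O | ρ g q ∈ B a} = #{a ∈ O | q ∈ B a} :=
  (card_equiv (σ g) fun a => by simp [hO.apply_mem_iff, apply_mem_apply_iff hσ]).symm

theorem sum_card_inter_apply_left (hσ : ∀ g a, B (σ g a) = (B a).image (ρ g))
    {O : Finset β} {a₀ : β} (hO : IsOrbit σ O a₀) (g : G) (a : β) :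
    ∑ a' ∈ O, #(B (σ g a) ∩ B a') = ∑ a' ∈ O, #(B a ∩ B a') :=
  (sum_equiv (σ g) (fun a' => (hO.apply_mem_iff g a').symm)
    fun a' _ => (card_inter_apply hσ g a a').symm).symm

end Design

def pointOrbitMatrix {ι κ α β : Type*} [DecidableEq α] (B : β → Finset α) (BO : κ → Finset β) (rep : ι → α) :
    Matrix ι κ ℕ :=
  fun i j => #{a ∈ BO j | rep i ∈ B a}

theorem sum_pointOrbitMatrix_mul_eq_sum_card_inter {G α β ι κ : Type*} [Group G]
    [Fintype α] [DecidableEq α] [Fintype ι] {ρ : G →* Equiv.Perm α} {σ : G →* Equiv.Perm β}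
    {B : β → Finset α} (hσ : ∀ g a, B (σ g a) = (B a).image (ρ g))
    {PO : ι → Finset α} (hPOorb : ∀ i, ∃ pt, IsOrbit ρ (PO i) pt)
    (hPOcov : ∀ q, ∃ i, q ∈ PO i) (hPOdisj : ∀ i i', i ≠ i' → Disjoint (PO i) (PO i'))
    {ω : ℕ} (hPOsize : ∀ i, #(PO i) = ω) {rep : ι → α} (hrep : ∀ i, rep i ∈ PO i)
    {BO : κ → Finset β} {j j' : κ} {a₀ a₁ : β} (hO : IsOrbit σ (BO j) a₀)
    (hO' : IsOrbit σ (BO j') a₁) (hBOsize : #(BO j) = ω) :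
    ∑ i, pointOrbitMatrix B BO rep i j * pointOrbitMatrix B BO rep i j' =
      ∑ a' ∈ BO j', #(B a₀ ∩ B a') := by
  have hconst : ∀ i, ∀ q ∈ PO i, #{a ∈ BO j | q ∈ B a} * #{a' ∈ BO j' | q ∈ B a'} =
      pointOrbitMatrix B BO rep i j * pointOrbitMatrix B BO rep i j' := by
    intro i q hq
    obtain ⟨pt, hpt⟩ := hPOorb i
    obtain ⟨g, rfl⟩ := hpt.exists_apply_eq (hrep i) hq
    rw [card_filter_apply_mem hσ hO, card_filter_apply_mem hσ hO']
    rfl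
  have hrow : ∀ a ∈ BO j, ∑ a' ∈ BO j', #(B a ∩ B a') = ∑ a' ∈ BO j', #(B a₀ ∩ B a') := by
    intro a ha
    obtain ⟨g, rfl⟩ := hO.exists_apply_eq hO.self_mem ha
    exact sum_card_inter_apply_left hσ hO' g a₀
  have hω : 0 < ω := hBOsize ▸ card_pos.2 ⟨a₀, hO.self_mem⟩
  refine Nat.eq_of_mul_eq_mul_left hω ?_
  calc ω * ∑ i, pointOrbitMatrix B BO rep i j * pointOrbitMatrix B BO rep i j'
      = ∑ q, #{a ∈ BO j | q ∈ B a} * #{a' ∈ BO j' | q ∈ B a'} :=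
        (sum_eq_card_nsmul_sum_of_partition PO hPOcov hPOdisj hPOsize hconst).symm
    _ = ∑ a ∈ BO j, ∑ a' ∈ BO j', #(B a ∩ B a') := sum_card_filter_mul_card_filter B _ _
    _ = ω * ∑ a' ∈ BO j', #(B a₀ ∩ B a') := by rw [sum_const_nat hrow, hBOsize]

theorem dotProduct_eq_zero_of_mem_span {R ι : Type*} [CommSemiring R] [Fintype ι]
    {s : Set (ι → R)} (hs : ∀ u ∈ s, ∀ w ∈ s, u ⬝ᵥ w = 0) {u w : ι → R}
    (hu : u ∈ Submodule.span R s) (hw : w ∈ Submodule.span R s) : u ⬝ᵥ w = 0 := by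
  induction hu, hw using Submodule.span_induction₂ with
  | mem_mem u w hu hw => exact hs u hu w hw
  | zero_left => exact zero_dotProduct _
  | zero_right => exact dotProduct_zero _
  | add_left _ _ _ _ _ _ h₁ h₂ => rw [add_dotProduct, h₁, h₂, add_zero]
  | add_right _ _ _ _ _ _ h₁ h₂ => rw [dotProduct_add, h₁, h₂, add_zero]
  | smul_left r _ _ _ _ h => rw [smul_dotProduct, h, smul_zero]
  | smul_right r _ _ _ _ h => rw [dotProduct_smul, h, smul_zero]

theorem stmt13_general (v b m n k x y ω p : ℕ)
    (hpk : p ∣ k) (hpx : p ∣ x) (hpy : p ∣ y)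
    (B : Fin b → Finset (Fin v))
    (hk : ∀ a, (B a).card = k)
    (hqs : ∀ a a', a ≠ a' → (B a ∩ B a').card = x ∨ (B a ∩ B a').card = y)
    (G : Subgroup (Equiv.Perm (Fin v)))
    (σ : G →* Equiv.Perm (Fin b))
    (hσ : ∀ (g : G) (a : Fin b), B (σ g a) = (B a).image (g : Equiv.Perm (Fin v)))
    (PO : Fin m → Finset (Fin v))
    (hPOorb : ∀ i, ∃ pt, ∀ q, q ∈ PO i ↔ ∃ g : G, (g : Equiv.Perm (Fin v)) pt = q)
    (hPOcov : ∀ pt, ∃ i, pt ∈ PO i)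
    (hPOdisj : ∀ i i', i ≠ i' → Disjoint (PO i) (PO i'))
    (hPOsize : ∀ i, (PO i).card = ω)
    (BO : Fin n → Finset (Fin b))
    (hBOorb : ∀ j, ∃ a, ∀ c, c ∈ BO j ↔ ∃ g : G, σ g a = c)
    (hBOsize : ∀ j, (BO j).card = ω)
    (rep : Fin m → Fin v) (hrep : ∀ i, rep i ∈ PO i)
    (col : Fin n → (Fin m → ZMod p))
    (hcol : ∀ j i, col j i = (((BO j).filter (fun a => rep i ∈ B a)).card : ZMod p)) :
    ∀ u ∈ Submodule.span (ZMod p) (Set.range col),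
      ∀ w ∈ Submodule.span (ZMod p) (Set.range col), ∑ i, u i * w i = 0 := by
  have hdvd : ∀ a a', p ∣ #(B a ∩ B a') := by
    intro a a'
    by_cases h : a = a'
    · rw [h, inter_self, hk]
      exact hpk
    · rcases hqs a a' h with h | h <;> rw [h] <;> assumption
  intro u hu w hw
  refine dotProduct_eq_zero_of_mem_span ?_ hu hw
  rintro _ ⟨j, rfl⟩ _ ⟨j', rfl⟩
  obtain ⟨a₀, hO⟩ := hBOorb j
  obtain ⟨a₁, hO'⟩ := hBOorb j'
  have hcolumns := sum_pointOrbitMatrix_mul_eq_sum_card_inter (ρ := G.subtype) hσ hPOorb hPOcov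
    hPOdisj hPOsize hrep hO hO' (hBOsize j)
  have hsum : p ∣ ∑ i, pointOrbitMatrix B BO rep i j * pointOrbitMatrix B BO rep i j' :=
    hcolumns ▸ dvd_sum fun a' _ => hdvd a₀ a'
  simpa [dotProduct, hcol, pointOrbitMatrix] using (ZMod.natCast_eq_zero_iff _ p).2 hsum

/-- Let `G` be an automorphism group of a quasi-symmetric `(v,k,λ)` design with block
intersection numbers `x` and `y`, acting on points and blocks with all orbits of the
same size `ω`. If a prime `p` divides `k`, `x` and `y`, then the columns of the point
orbit matrix span a self-orthogonal code of length `v/ω` over `F_p`. -/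
theorem stmt13 (v b m n k lam x y ω p : ℕ) (hp : p.Prime) (hxy : x < y)
    (hpk : p ∣ k) (hpx : p ∣ x) (hpy : p ∣ y)
    (B : Fin b → Finset (Fin v))
    (hk : ∀ a, (B a).card = k)
    (hlam : ∀ q q' : Fin v, q ≠ q' →
      (Finset.univ.filter (fun a => q ∈ B a ∧ q' ∈ B a)).card = lam)
    (hqs : ∀ a a', a ≠ a' → (B a ∩ B a').card = x ∨ (B a ∩ B a').card = y)
    (G : Subgroup (Equiv.Perm (Fin v)))
    (σ : G →* Equiv.Perm (Fin b))
    (hσ : ∀ (g : G) (a : Fin b), B (σ g a) = (B a).image (g : Equiv.Perm (Fin v)))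
    (PO : Fin m → Finset (Fin v))
    (hPOorb : ∀ i, ∃ pt, ∀ q, q ∈ PO i ↔ ∃ g : G, (g : Equiv.Perm (Fin v)) pt = q)
    (hPOcov : ∀ pt, ∃ i, pt ∈ PO i)
    (hPOdisj : ∀ i i', i ≠ i' → Disjoint (PO i) (PO i'))
    (hPOsize : ∀ i, (PO i).card = ω)
    (BO : Fin n → Finset (Fin b))
    (hBOorb : ∀ j, ∃ a, ∀ c, c ∈ BO j ↔ ∃ g : G, σ g a = c)
    (hBOcov : ∀ a, ∃ j, a ∈ BO j)
    (hBOdisj : ∀ j j', j ≠ j' → Disjoint (BO j) (BO j'))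
    (hBOsize : ∀ j, (BO j).card = ω)
    (rep : Fin m → Fin v) (hrep : ∀ i, rep i ∈ PO i)
    (col : Fin n → (Fin m → ZMod p))
    (hcol : ∀ j i, col j i = (((BO j).filter (fun a => rep i ∈ B a)).card : ZMod p)) :
    ∀ u ∈ Submodule.span (ZMod p) (Set.range col),
      ∀ w ∈ Submodule.span (ZMod p) (Set.range col), ∑ i, u i * w i = 0 :=
  stmt13_general v b m n k x y ω p hpk hpx hpy B hk hqs G σ hσ PO hPOorb hPOcov hPOdisj hPOsize BO
    hBOorb hBOsize rep hrep col hcol
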